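/- Let n ≥ 1 and let f₁,…,fₙ, g₁,…,gₙ be homogeneous polynomials of degree 2 and N a homogeneous polynomial of degree 3 in ℂ[x₁,…,xₙ] with gᵢ(f₁,…,fₙ) = N·xᵢ for all i. Then for all indices i, j (equal or not), the polynomial xᵢ²·(∂N/∂xⱼ) belongs to the ideal I = (f₁,…,fₙ); in other words every partial derivative of N lies in the saturation of I. -/

import Mathlib

/-!
Since `gᵢ` has no constant or linear terms, both `gᵢ(f)` and each `(∂gᵢ/∂xₖ)(f)` lie in
`I = (f₁,…,fₙ)`. Hence `N·xᵢ = gᵢ(f) ∈ I` and, by the chain rule,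
`∂(N·xᵢ)/∂xⱼ = ∑ₖ (∂gᵢ/∂xₖ)(f) · ∂fₖ/∂xⱼ ∈ I`. The Leibniz rule then gives
`xᵢ² · ∂N/∂xⱼ = xᵢ · ∂(N·xᵢ)/∂xⱼ - δᵢⱼ · N·xᵢ ∈ I`.
-/

open MvPolynomial

namespace MvPolynomial

variable {σ τ R : Type*} [CommRing R]

lemma IsHomogeneous.constantCoeff_eq_zero {φ : MvPolynomial σ R} {n : ℕ}
    (hφ : φ.IsHomogeneous n) (hn : n ≠ 0) : constantCoeff φ = 0 := by
  simpa [constantCoeff_eq] using hφ.coeff_eq_zero (d := 0) (by simpa using hn.symm)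

lemma bind₁_mem_span_range_of_constantCoeff_eq_zero (f : σ → MvPolynomial τ R)
    {p : MvPolynomial σ R} (hp : constantCoeff p = 0) :
    bind₁ f p ∈ Ideal.span (Set.range f) := by
  -- modulo the ideal, `bind₁ f` is evaluation at `0`, which reads off the constant coefficient
  have hf : (fun i ↦ Ideal.Quotient.mkₐ R (Ideal.span (Set.range f)) (f i)) = 0 :=
    _root_.funext fun i ↦ Ideal.Quotient.eq_zero_iff_mem.2 (Ideal.subset_span ⟨i, rfl⟩)
  rw [← Ideal.Quotient.eq_zero_iff_mem, ← Ideal.Quotient.mkₐ_eq_mk R, bind₁,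
    comp_aeval_apply, hf, aeval_zero, hp, map_zero]

lemma pderiv_bind₁ [Fintype σ] (f : σ → MvPolynomial τ R) (j : τ) (p : MvPolynomial σ R) :
    pderiv j (bind₁ f p) = ∑ k, bind₁ f (pderiv k p) * pderiv j (f k) := by
  classical
  induction p using MvPolynomial.induction_on with
  | C a => simp
  | add p q hp hq => simp only [map_add, hp, hq, add_mul, Finset.sum_add_distrib]
  | mul_X p i hp =>
    simp only [map_mul, bind₁_X_right, pderiv_mul, hp, pderiv_X, map_add, add_mul,
      Finset.sum_add_distrib, Finset.sum_mul]
    congr 1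
    · exact Finset.sum_congr rfl fun k _ ↦ by ring
    · simp [Pi.single_apply]

end MvPolynomial

theorem stmt3_general (n : ℕ)
    (f g : Fin n → MvPolynomial (Fin n) ℂ)
    (N : MvPolynomial (Fin n) ℂ)
    (hg : ∀ i, (g i).IsHomogeneous 2)
    (hgf : ∀ i, bind₁ f (g i) = N * X i) :
    ∀ i j : Fin n,
      X i ^ 2 * pderiv j N ∈ Ideal.span (Set.range f) := by
  intro i j
  have hNX : N * X i ∈ Ideal.span (Set.range f) := by
    rw [← hgf i]
    exact bind₁_mem_span_range_of_constantCoeff_eq_zero f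
      ((hg i).constantCoeff_eq_zero two_ne_zero)
  have hpderiv_NX : pderiv j (N * X i) ∈ Ideal.span (Set.range f) := by
    rw [← hgf i, pderiv_bind₁]
    refine Ideal.sum_mem _ fun k _ ↦ Ideal.mul_mem_right _ _ ?_
    exact bind₁_mem_span_range_of_constantCoeff_eq_zero f
      ((hg i).pderiv.constantCoeff_eq_zero one_ne_zero)
  have leibniz :
      X i ^ 2 * pderiv j N = X i * pderiv j (N * X i) - pderiv j (X i) * (N * X i) := by
    rw [pderiv_mul]
    ring
  rw [leibniz]
  exact Ideal.sub_mem _ (Ideal.mul_mem_left _ _ hpderiv_NX) (Ideal.mul_mem_left _ _ hNX)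

/-- For a quadro-quadric Cremona transformation with lift `F = (f₁,…,fₙ)` and cubic
form `N`, one has `xᵢ² · ∂N/∂xⱼ ∈ (f₁,…,fₙ)` for all `i`, `j`; in other words the
partial derivatives of `N` lie in the saturation of the ideal `(f₁,…,fₙ)`. -/
theorem stmt3 (n : ℕ) (hn : 1 ≤ n)
    (f g : Fin n → MvPolynomial (Fin n) ℂ)
    (N : MvPolynomial (Fin n) ℂ)
    (hf : ∀ i, (f i).IsHomogeneous 2) (hg : ∀ i, (g i).IsHomogeneous 2)
    (hN : N.IsHomogeneous 3)
    (hgf : ∀ i, bind₁ f (g i) = N * X i) :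
    ∀ i j : Fin n,
      X i ^ 2 * pderiv j N ∈ Ideal.span (Set.range f) :=
  stmt3_general n f g N hg hgf
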